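/- arXiv:2304.14074 — 5 statements merged into one kernel-verified Lean document; each statement's English description precedes it below -/
import Mathlib

section
/- Let N ≥ 1 be a natural number and β a real number with 0 < β < 1. Let 𝕋(β) be the N×N strictly lower triangular Toeplitz matrix with entries 𝕋_{ij} = β^{i−j−1} if i > j and 𝕋_{ij} = 0 if i ≤ j. Then for every natural number k ≥ 1, the maximum-absolute-row-sum norm satisfies ‖𝕋(β)^k‖_∞ ≤ min{ ((1 − β^{N−1})/(1 − β))^k , C(N−1, k) }, where ‖A‖_∞ = max_{1≤i≤N} Σ_{j=1}^{N} |A_{ij}| and C(·,·) denotes the binomial coefficient. -/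
open Finset

lemma hockey_stick (n k : ℕ) : ∑ m ∈ Finset.range n, m.choose k = n.choose (k+1) := by
  induction n with
  | zero => simp
  | succ n ih =>
    rw [Finset.sum_range_succ, ih, Nat.choose_succ_succ']
    exact Nat.add_comm _ _

theorem stmt5 (N : ℕ) (hN : 1 ≤ N) (β : ℝ) (hβ0 : 0 < β) (hβ1 : β < 1)
    (T : Matrix (Fin N) (Fin N) ℝ)
    (hT : ∀ i j : Fin N,
      T i j = if (j : ℕ) < (i : ℕ) then β ^ ((i : ℕ) - (j : ℕ) - 1) else 0) :
    ∀ k : ℕ, 1 ≤ k →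
      (Finset.univ.sup' ⟨(⟨0, hN⟩ : Fin N), Finset.mem_univ _⟩
          fun i => ∑ j, |(T ^ k) i j|) ≤
        min (((1 - β ^ (N - 1)) / (1 - β)) ^ k) ((N - 1).choose k : ℝ) := by
  set c : ℝ := (1 - β ^ (N - 1)) / (1 - β) with hc
  have hβ1' : (0:ℝ) < 1 - β := by linarith
  have hβle1 : ∀ m : ℕ, β ^ m ≤ 1 := fun m => pow_le_one₀ hβ0.le hβ1.le
  have hc0 : 0 ≤ c := div_nonneg (by linarith [hβle1 (N-1)]) hβ1'.le
  have hTnn : ∀ i j, 0 ≤ T i j := by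
    intro i j; rw [hT]; split
    · positivity
    · exact le_refl 0
  have hpow_nn : ∀ k : ℕ, ∀ i j : Fin N, 0 ≤ (T ^ k) i j := by
    intro k
    induction k with
    | zero =>
      intro i j
      simp only [pow_zero, Matrix.one_apply]
      split <;> norm_num
    | succ k ih =>
      intro i j
      rw [pow_succ, Matrix.mul_apply]
      exact Finset.sum_nonneg fun l _ => mul_nonneg (ih i l) (hTnn l j)
  -- row sum of T itself
  have hrowT : ∀ i : Fin N, ∑ j, T i j ≤ c := by
    intro i
    have h1 : ∑ j, T i j =
        ∑ j ∈ Finset.range N, (if j < (i:ℕ) then β ^ ((i:ℕ) - j - 1) else 0) := by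
      rw [← Fin.sum_univ_eq_sum_range (fun j => if j < (i:ℕ) then β ^ ((i:ℕ) - j - 1) else 0) N]
      exact Finset.sum_congr rfl fun j _ => by rw [hT]
    have h2 : ∑ j ∈ Finset.range ((i:ℕ)), (if j < (i:ℕ) then β ^ ((i:ℕ) - j - 1) else 0)
        = ∑ j ∈ Finset.range N, (if j < (i:ℕ) then β ^ ((i:ℕ) - j - 1) else 0) := by
      apply Finset.sum_subset
      · exact Finset.range_subset_range.2 i.isLt.le
      · intro x _ hx
        rw [Finset.mem_range] at hx
        rw [if_neg (by omega)]
    have h3 : ∑ j ∈ Finset.range ((i:ℕ)), (if j < (i:ℕ) then β ^ ((i:ℕ) - j - 1) else 0)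
        = ∑ m ∈ Finset.range ((i:ℕ)), β ^ m := by
      rw [← Finset.sum_range_reflect (fun m => β ^ m) (i:ℕ)]
      apply Finset.sum_congr rfl
      intro j hj
      rw [Finset.mem_range] at hj
      rw [if_pos hj]
      congr 1
      omega
    have h4 : ∑ m ∈ Finset.range ((i:ℕ)), β ^ m ≤ ∑ m ∈ Finset.range (N-1), β ^ m := by
      apply Finset.sum_le_sum_of_subset_of_nonneg
      · exact Finset.range_subset_range.2 (by have := i.isLt; omega)
      · intro m _ _; positivity
    have h5 : ∑ m ∈ Finset.range (N-1), β ^ m = c := by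
      rw [geom_sum_eq hβ1.ne (N-1), hc, div_eq_div_iff (by linarith) (by linarith)]
      ring
    rw [h1, ← h2, h3]
    linarith [h4, h5]
  -- bound 1: row sums of T^k
  have key1 : ∀ k : ℕ, 1 ≤ k → ∀ i : Fin N, ∑ j, (T ^ k) i j ≤ c ^ k := by
    intro k hk
    induction k, hk using Nat.le_induction with
    | base => intro i; rw [pow_one]; simpa [pow_one] using hrowT i
    | succ k hk ih =>
      intro i
      calc ∑ j, (T ^ (k+1)) i j = ∑ j, ∑ l, T i l * (T ^ k) l j := by
            simp [pow_succ', Matrix.mul_apply]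
        _ = ∑ l, T i l * ∑ j, (T ^ k) l j := by
            rw [Finset.sum_comm]; simp [Finset.mul_sum]
        _ ≤ ∑ l, T i l * c ^ k :=
            Finset.sum_le_sum fun l _ => mul_le_mul_of_nonneg_left (ih l) (hTnn i l)
        _ = (∑ l, T i l) * c ^ k := by rw [Finset.sum_mul]
        _ ≤ c * c ^ k := mul_le_mul_of_nonneg_right (hrowT i) (pow_nonneg hc0 k)
        _ = c ^ (k+1) := (pow_succ' c k).symm
  -- bound 2: entrywise choose bound
  have key2 : ∀ k : ℕ, 1 ≤ k → ∀ i j : Fin N,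
      (T ^ k) i j ≤ if (j:ℕ) < (i:ℕ) then ((((i:ℕ) - (j:ℕ) - 1).choose (k-1) : ℕ) : ℝ) else 0 := by
    intro k hk
    induction k, hk using Nat.le_induction with
    | base =>
      intro i j
      rw [pow_one, hT]
      split
      · simpa using hβle1 ((i:ℕ) - (j:ℕ) - 1)
      · exact le_refl 0
    | succ k hk ih =>
      intro i j
      rw [pow_succ', Matrix.mul_apply]
      have step1 : ∑ l, T i l * (T ^ k) l j ≤
          ∑ l : Fin N, (if (l:ℕ) < (i:ℕ) ∧ (j:ℕ) < (l:ℕ)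
            then (((l:ℕ) - (j:ℕ) - 1).choose (k-1) : ℝ) else 0) := by
        apply Finset.sum_le_sum
        intro l _
        have hb : T i l ≤ (if (l:ℕ) < (i:ℕ) then (1:ℝ) else 0) := by
          rw [hT]; split
          · exact hβle1 _
          · exact le_refl 0
        have := mul_le_mul hb (ih l j) (hpow_nn k l j) (by split <;> norm_num)
        refine this.trans ?_
        by_cases h1 : (l:ℕ) < (i:ℕ) <;> by_cases h2 : (j:ℕ) < (l:ℕ) <;>
          simp [h1, h2]
      refine step1.trans ?_
      rw [Fin.sum_univ_eq_sum_range (fun l => (if l < (i:ℕ) ∧ (j:ℕ) < l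
            then (((l:ℕ) - (j:ℕ) - 1).choose (k-1) : ℝ) else 0)) N]
      by_cases hji : (j:ℕ) < (i:ℕ)
      · rw [if_pos hji]
        have hsub : Finset.Ico ((j:ℕ)+1) (i:ℕ) ⊆ Finset.range N := by
          intro x hx
          rw [Finset.mem_Ico] at hx
          rw [Finset.mem_range]
          exact lt_trans hx.2 i.isLt
        have heq : ∑ l ∈ Finset.range N, (if l < (i:ℕ) ∧ (j:ℕ) < l
              then ((l - (j:ℕ) - 1).choose (k-1) : ℝ) else 0)
            = ∑ l ∈ Finset.Ico ((j:ℕ)+1) (i:ℕ), ((l - (j:ℕ) - 1).choose (k-1) : ℝ) := by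
          rw [← Finset.sum_subset hsub (fun x _ hx => by
            rw [Finset.mem_Ico] at hx
            rw [if_neg (by omega)])]
          apply Finset.sum_congr rfl
          intro l hl
          rw [Finset.mem_Ico] at hl
          rw [if_pos (by omega)]
        rw [heq, Finset.sum_Ico_eq_sum_range]
        have heq2 : ∀ m ∈ Finset.range ((i:ℕ) - ((j:ℕ)+1)),
            ((((j:ℕ)+1+m) - (j:ℕ) - 1).choose (k-1) : ℝ) = (m.choose (k-1) : ℝ) := by
          intro m _
          have : ((j:ℕ)+1+m) - (j:ℕ) - 1 = m := by omega
          rw [this]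
        rw [Finset.sum_congr rfl heq2]
        have hcast : ∑ m ∈ Finset.range ((i:ℕ) - ((j:ℕ)+1)), (m.choose (k-1) : ℝ)
            = ((∑ m ∈ Finset.range ((i:ℕ) - ((j:ℕ)+1)), m.choose (k-1) : ℕ) : ℝ) := by
          push_cast; ring
        rw [hcast, hockey_stick]
        have : (k - 1) + 1 = (k+1) - 1 := by omega
        rw [this]
        have : (i:ℕ) - ((j:ℕ)+1) = (i:ℕ) - (j:ℕ) - 1 := by omega
        rw [this]
      · rw [if_neg hji]
        apply le_of_eq
        apply Finset.sum_eq_zero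
        intro l _
        rw [if_neg (by omega)]
  -- bound 2: row sums
  have key2sum : ∀ k : ℕ, 1 ≤ k → ∀ i : Fin N,
      ∑ j, (T ^ k) i j ≤ ((N-1).choose k : ℝ) := by
    intro k hk i
    have h1 : ∑ j, (T ^ k) i j ≤
        ∑ j : Fin N, (if (j:ℕ) < (i:ℕ) then ((((i:ℕ) - (j:ℕ) - 1).choose (k-1) : ℕ) : ℝ) else 0) :=
      Finset.sum_le_sum fun j _ => key2 k hk i j
    refine h1.trans ?_
    rw [Fin.sum_univ_eq_sum_range (fun j => (if j < (i:ℕ)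
      then ((((i:ℕ) - j - 1).choose (k-1) : ℕ) : ℝ) else 0)) N]
    have h2 : ∑ j ∈ Finset.range ((i:ℕ)), (if j < (i:ℕ)
          then ((((i:ℕ) - j - 1).choose (k-1) : ℕ) : ℝ) else 0)
        = ∑ j ∈ Finset.range N, (if j < (i:ℕ)
          then ((((i:ℕ) - j - 1).choose (k-1) : ℕ) : ℝ) else 0) := by
      apply Finset.sum_subset (Finset.range_subset_range.2 i.isLt.le)
      intro x _ hx
      rw [Finset.mem_range] at hx
      rw [if_neg (by omega)]
    rw [← h2]
    have h3 : ∑ j ∈ Finset.range ((i:ℕ)), (if j < (i:ℕ)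
          then ((((i:ℕ) - j - 1).choose (k-1) : ℕ) : ℝ) else 0)
        = ∑ m ∈ Finset.range ((i:ℕ)), ((m.choose (k-1) : ℕ) : ℝ) := by
      rw [← Finset.sum_range_reflect (fun m => ((m.choose (k-1) : ℕ) : ℝ)) (i:ℕ)]
      apply Finset.sum_congr rfl
      intro j hj
      rw [Finset.mem_range] at hj
      rw [if_pos hj]
      congr 2
      omega
    rw [h3]
    have h4 : ∑ m ∈ Finset.range ((i:ℕ)), ((m.choose (k-1) : ℕ) : ℝ)
        = (((i:ℕ).choose k : ℕ) : ℝ) := by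
      rw [← Nat.cast_sum, hockey_stick, show (k-1)+1 = k from by omega]
    rw [h4]
    exact_mod_cast Nat.choose_le_choose k (by have := i.isLt; omega)
  -- conclusion
  intro k hk
  apply Finset.sup'_le
  intro i _
  have habs : ∑ j, |(T ^ k) i j| = ∑ j, (T ^ k) i j :=
    Finset.sum_congr rfl fun j _ => abs_of_nonneg (hpow_nn k i j)
  rw [habs]
  exact le_min (key1 k hk i) (key2sum k hk i)
end

section
/- With D_h the m×m discrete Laplacian and P_1 = (I − ΔT·D_h + ε²ΔT·D_h²)⁻¹(I − ΔT·D_h), the coarse propagator 𝒢(U) = P_1·U satisfies the growth condition ‖P_1·U‖ ≤ ‖U‖ for every U ∈ ℝ^m. -/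
/-- The m×m discrete Dirichlet Laplacian with mesh size `h`. -/
noncomputable def Dh (m : ℕ) (h : ℝ) : Matrix (Fin m) (Fin m) ℝ :=
  Matrix.of fun i j =>
    if (i : ℕ) = (j : ℕ) then 1 / h ^ 2 * (-2)
    else if (i : ℕ) + 1 = (j : ℕ) ∨ (j : ℕ) + 1 = (i : ℕ) then 1 / h ^ 2 * 1
    else 0

/-- `Pmat m h ΔT ε i = (I − iΔT·D_h + ε²ΔT·D_h²)⁻¹ (I − iΔT·D_h)`. -/
noncomputable def Pmat (m : ℕ) (h ΔT ε : ℝ) (i : ℕ) : Matrix (Fin m) (Fin m) ℝ :=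
  ((1 : Matrix (Fin m) (Fin m) ℝ) - ((i : ℝ) * ΔT) • Dh m h
      + (ε ^ 2 * ΔT) • Dh m h ^ 2)⁻¹
    * ((1 : Matrix (Fin m) (Fin m) ℝ) - ((i : ℝ) * ΔT) • Dh m h)

/-- `PJmat m h ΔT ε J i = [(I − (iΔT/J)·D_h + ε²(ΔT/J)·D_h²)⁻¹ (I − (iΔT/J)·D_h)]^J`. -/
noncomputable def PJmat (m : ℕ) (h ΔT ε : ℝ) (J i : ℕ) : Matrix (Fin m) (Fin m) ℝ :=
  (((1 : Matrix (Fin m) (Fin m) ℝ) - ((i : ℝ) * ΔT / (J : ℝ)) • Dh m h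
      + (ε ^ 2 * (ΔT / (J : ℝ))) • Dh m h ^ 2)⁻¹
    * ((1 : Matrix (Fin m) (Fin m) ℝ) - ((i : ℝ) * ΔT / (J : ℝ)) • Dh m h)) ^ J

/-- The action of a matrix on `EuclideanSpace ℝ (Fin m)` (i.e. `ℝ^m` with the
Euclidean norm), given by matrix-vector multiplication. -/
noncomputable def act {m : ℕ} (A : Matrix (Fin m) (Fin m) ℝ)
    (U : EuclideanSpace ℝ (Fin m)) : EuclideanSpace ℝ (Fin m) :=
  Matrix.toEuclideanCLM (𝕜 := ℝ) A U

/-- The operator (spectral) norm of a matrix, induced by the Euclidean norm. -/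
noncomputable def opNorm {m : ℕ} (A : Matrix (Fin m) (Fin m) ℝ) : ℝ :=
  ‖Matrix.toEuclideanCLM (𝕜 := ℝ) A‖


open Matrix Finset

lemma Dh_symm (m : ℕ) (h : ℝ) : (Dh m h)ᵀ = Dh m h := by
  ext i j
  simp only [Matrix.transpose_apply, Dh, Matrix.of_apply]
  split_ifs <;> (first | rfl | (exfalso; omega))

lemma Dh_entry (m : ℕ) (h : ℝ) (j k : Fin m) :
    Dh m h j k = 1 / h ^ 2 *
      ((if (j : ℕ) = (k : ℕ) then (-2 : ℝ) else 0)
        + (if (j : ℕ) + 1 = (k : ℕ) then 1 else 0)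
        + (if (k : ℕ) + 1 = (j : ℕ) then 1 else 0)) := by
  simp only [Dh, Matrix.of_apply]
  split_ifs <;> (first | ring1 | (exfalso; omega))

lemma sum_ite_le {m : ℕ} (P : Fin m → Prop) [DecidablePred P]
    (hP : ∀ a b, P a → P b → a = b) (c : ℝ) (hc : 0 ≤ c) :
    (∑ k, if P k then c else 0) ≤ c := by
  by_cases hex : ∃ k, P k
  · obtain ⟨k0, hk0⟩ := hex
    have hiff : ∀ k, P k ↔ k = k0 := fun k => ⟨fun h => hP _ _ h hk0, fun h => h ▸ hk0⟩
    simp only [hiff]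
    rw [Finset.sum_ite_eq' Finset.univ k0 (fun _ => c)]
    simp
  · push_neg at hex
    simp [hex, hc]

lemma quad_nonpos (m : ℕ) (h : ℝ) (hh : 0 < h) (x : Fin m → ℝ) :
    x ⬝ᵥ (Dh m h).mulVec x ≤ 0 := by
  have expand : x ⬝ᵥ (Dh m h).mulVec x = 1 / h ^ 2 *
      ∑ j : Fin m, ∑ k : Fin m, (x j *
        ((if (j : ℕ) = (k : ℕ) then (-2 : ℝ) else 0)
          + (if (j : ℕ) + 1 = (k : ℕ) then 1 else 0)
          + (if (k : ℕ) + 1 = (j : ℕ) then 1 else 0)) * x k) := by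
    simp only [dotProduct, Matrix.mulVec, Dh_entry]
    rw [Finset.mul_sum]
    refine Finset.sum_congr rfl fun j _ => ?_
    rw [Finset.mul_sum, Finset.mul_sum]
    refine Finset.sum_congr rfl fun k _ => ?_
    ring
  rw [expand]
  have hsplit : ∑ j : Fin m, ∑ k : Fin m, (x j *
        ((if (j : ℕ) = (k : ℕ) then (-2 : ℝ) else 0)
          + (if (j : ℕ) + 1 = (k : ℕ) then 1 else 0)
          + (if (k : ℕ) + 1 = (j : ℕ) then 1 else 0)) * x k)
      = (∑ j : Fin m, ∑ k : Fin m, (if (j : ℕ) = (k : ℕ) then -2 * (x j * x k) else 0))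
        + (∑ j : Fin m, ∑ k : Fin m, (if (j : ℕ) + 1 = (k : ℕ) then x j * x k else 0))
        + (∑ j : Fin m, ∑ k : Fin m, (if (k : ℕ) + 1 = (j : ℕ) then x j * x k else 0)) := by
    rw [← Finset.sum_add_distrib, ← Finset.sum_add_distrib]
    refine Finset.sum_congr rfl fun j _ => ?_
    rw [← Finset.sum_add_distrib, ← Finset.sum_add_distrib]
    refine Finset.sum_congr rfl fun k _ => ?_
    split_ifs <;> ring1
  rw [hsplit]
  have hT1 : (∑ j : Fin m, ∑ k : Fin m, (if (j : ℕ) = (k : ℕ) then -2 * (x j * x k) else 0))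
      = ∑ j : Fin m, -2 * (x j * x j) := by
    refine Finset.sum_congr rfl fun j _ => ?_
    simp only [Fin.val_eq_val]
    rw [Finset.sum_ite_eq Finset.univ j (fun k => -2 * (x j * x k))]
    simp
  have hT3 : (∑ j : Fin m, ∑ k : Fin m, (if (k : ℕ) + 1 = (j : ℕ) then x j * x k else 0))
      = ∑ j : Fin m, ∑ k : Fin m, (if (j : ℕ) + 1 = (k : ℕ) then x j * x k else 0) := by
    rw [Finset.sum_comm]
    refine Finset.sum_congr rfl fun a _ => Finset.sum_congr rfl fun b _ => ?_
    split_ifs <;> ring1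
  rw [hT1, hT3]
  have hT2 : (∑ j : Fin m, ∑ k : Fin m, (if (j : ℕ) + 1 = (k : ℕ) then x j * x k else 0))
      ≤ ∑ j : Fin m, x j * x j := by
    have step1 : (∑ j : Fin m, ∑ k : Fin m, (if (j : ℕ) + 1 = (k : ℕ) then x j * x k else 0))
        ≤ ∑ j : Fin m, ∑ k : Fin m, (if (j : ℕ) + 1 = (k : ℕ) then (x j * x j + x k * x k) / 2 else 0) := by
      refine Finset.sum_le_sum fun j _ => Finset.sum_le_sum fun k _ => ?_
      split_ifs
      · nlinarith [sq_nonneg (x j - x k)]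
      · exact le_rfl
    have step2 : (∑ j : Fin m, ∑ k : Fin m, (if (j : ℕ) + 1 = (k : ℕ) then (x j * x j + x k * x k) / 2 else 0))
        = (∑ j : Fin m, ∑ k : Fin m, (if (j : ℕ) + 1 = (k : ℕ) then x j * x j / 2 else 0))
          + (∑ j : Fin m, ∑ k : Fin m, (if (j : ℕ) + 1 = (k : ℕ) then x k * x k / 2 else 0)) := by
      rw [← Finset.sum_add_distrib]
      refine Finset.sum_congr rfl fun j _ => ?_
      rw [← Finset.sum_add_distrib]
      refine Finset.sum_congr rfl fun k _ => ?_
      split_ifs <;> ring1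
    have hU1 : (∑ j : Fin m, ∑ k : Fin m, (if (j : ℕ) + 1 = (k : ℕ) then x j * x j / 2 else 0))
        ≤ ∑ j : Fin m, x j * x j / 2 := by
      refine Finset.sum_le_sum fun j _ => ?_
      exact sum_ite_le (fun k => (j : ℕ) + 1 = (k : ℕ))
        (fun a b ha hb => Fin.ext (by omega)) _ (div_nonneg (mul_self_nonneg _) (by norm_num))
    have hU2 : (∑ j : Fin m, ∑ k : Fin m, (if (j : ℕ) + 1 = (k : ℕ) then x k * x k / 2 else 0))
        ≤ ∑ k : Fin m, x k * x k / 2 := by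
      rw [Finset.sum_comm]
      refine Finset.sum_le_sum fun k _ => ?_
      exact sum_ite_le (fun j => (j : ℕ) + 1 = (k : ℕ))
        (fun a b ha hb => Fin.ext (by omega)) _ (div_nonneg (mul_self_nonneg _) (by norm_num))
    have : (∑ j : Fin m, x j * x j / 2) + (∑ k : Fin m, x k * x k / 2)
        = ∑ j : Fin m, x j * x j := by
      rw [← Finset.sum_add_distrib]
      exact Finset.sum_congr rfl fun j _ => by ring1
    linarith
  have hsq : (0:ℝ) ≤ ∑ j : Fin m, x j * x j :=
    Finset.sum_nonneg fun j _ => mul_self_nonneg _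
  have hneg : (∑ j : Fin m, -2 * (x j * x j)) = -2 * ∑ j : Fin m, x j * x j := by
    rw [Finset.mul_sum]
  have hpos : (0:ℝ) ≤ 1 / h ^ 2 := by positivity
  have hin : (∑ j : Fin m, -2 * (x j * x j))
      + (∑ j : Fin m, ∑ k : Fin m, (if (j : ℕ) + 1 = (k : ℕ) then x j * x k else 0))
      + (∑ j : Fin m, ∑ k : Fin m, (if (j : ℕ) + 1 = (k : ℕ) then x j * x k else 0)) ≤ 0 := by
    rw [hneg]; linarith
  calc 1 / h ^ 2 * ((∑ j : Fin m, -2 * (x j * x j))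
      + (∑ j : Fin m, ∑ k : Fin m, (if (j : ℕ) + 1 = (k : ℕ) then x j * x k else 0))
      + (∑ j : Fin m, ∑ k : Fin m, (if (j : ℕ) + 1 = (k : ℕ) then x j * x k else 0)))
      ≤ 1 / h ^ 2 * 0 := mul_le_mul_of_nonneg_left hin hpos
    _ = 0 := mul_zero _

lemma dot_self_nonneg {m : ℕ} (v : Fin m → ℝ) : 0 ≤ v ⬝ᵥ v :=
  Finset.sum_nonneg fun i _ => mul_self_nonneg _

lemma key_ineq (m : ℕ) (h ΔT ε : ℝ) (hh : 0 < h) (hΔT : 0 < ΔT) (y : Fin m → ℝ) :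
    ((1 - ΔT • Dh m h).mulVec y) ⬝ᵥ ((1 - ΔT • Dh m h).mulVec y)
      ≤ ((1 - ΔT • Dh m h + (ε ^ 2 * ΔT) • Dh m h ^ 2).mulVec y)
          ⬝ᵥ ((1 - ΔT • Dh m h + (ε ^ 2 * ΔT) • Dh m h ^ 2).mulVec y) := by
  set D := Dh m h with hD
  set c : ℝ := ε ^ 2 * ΔT with hc
  set n : Fin m → ℝ := (1 - ΔT • D).mulVec y with hn
  set z : Fin m → ℝ := D.mulVec y with hz
  have hw : (D ^ 2).mulVec y = D.mulVec z := by
    rw [hz, Matrix.mulVec_mulVec, ← pow_two]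
  have hMy : (1 - ΔT • D + c • D ^ 2).mulVec y = n + c • (D.mulVec z) := by
    rw [Matrix.add_mulVec, Matrix.smul_mulVec, hw, hn]
  rw [hMy]
  have hnz : n = y - ΔT • z := by
    rw [hn, Matrix.sub_mulVec, Matrix.one_mulVec, Matrix.smul_mulVec, hz]
  have hcross : 0 ≤ n ⬝ᵥ (D.mulVec z) := by
    have e1 : y ⬝ᵥ (D.mulVec z) = z ⬝ᵥ z := by
      rw [Matrix.dotProduct_mulVec, ← Matrix.mulVec_transpose, Dh_symm, ← hz]
    have e2 : z ⬝ᵥ (D.mulVec z) ≤ 0 := quad_nonpos m h hh z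
    rw [hnz, sub_dotProduct, smul_dotProduct, e1]
    have := dot_self_nonneg z
    have : 0 ≤ -(ΔT * (z ⬝ᵥ (D.mulVec z))) := by nlinarith
    simp only [smul_eq_mul]
    linarith [dot_self_nonneg z]
  have hzz : 0 ≤ (D.mulVec z) ⬝ᵥ (D.mulVec z) := dot_self_nonneg _
  have hcnn : 0 ≤ c := by positivity
  have expand : (n + c • D.mulVec z) ⬝ᵥ (n + c • D.mulVec z)
      = n ⬝ᵥ n + 2 * c * (n ⬝ᵥ (D.mulVec z)) + c ^ 2 * ((D.mulVec z) ⬝ᵥ (D.mulVec z)) := by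
    have hsymdot : (D.mulVec z) ⬝ᵥ n = n ⬝ᵥ (D.mulVec z) := dotProduct_comm _ _
    rw [dotProduct_add, add_dotProduct, add_dotProduct,
      smul_dotProduct, dotProduct_smul, smul_dotProduct,
      dotProduct_smul, hsymdot]
    simp only [smul_eq_mul]
    ring
  rw [expand]
  nlinarith [hcross, hzz, hcnn]

lemma euclid_norm_sq {m : ℕ} (v : EuclideanSpace ℝ (Fin m)) :
    ‖v‖ ^ 2 = (fun i => v i) ⬝ᵥ (fun i => v i) := by
  rw [EuclideanSpace.norm_eq, Real.sq_sqrt (by positivity)]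
  simp [dotProduct, sq]

set_option maxHeartbeats 1000000 in
theorem stmt7 (h ΔT ε : ℝ) (hh : 0 < h) (hΔT : 0 < ΔT) (hε : 0 < ε)
    (m : ℕ) (hm : 1 ≤ m) :
    ∀ U : EuclideanSpace ℝ (Fin m), ‖act (Pmat m h ΔT ε 1) U‖ ≤ ‖U‖ := by
  intro U
  have hP : Pmat m h ΔT ε 1
      = ((1 : Matrix (Fin m) (Fin m) ℝ) - ΔT • Dh m h + (ε ^ 2 * ΔT) • Dh m h ^ 2)⁻¹
        * ((1 : Matrix (Fin m) (Fin m) ℝ) - ΔT • Dh m h) := by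
    simp [Pmat]
  rw [hP]
  set D := Dh m h with hD
  set N : Matrix (Fin m) (Fin m) ℝ := 1 - ΔT • D with hN
  set M : Matrix (Fin m) (Fin m) ℝ := 1 - ΔT • D + (ε ^ 2 * ΔT) • D ^ 2 with hM
  have hActMul : ∀ (A B : Matrix (Fin m) (Fin m) ℝ) (x : EuclideanSpace ℝ (Fin m)),
      act (A * B) x = act A (act B x) := by
    intro A B x
    simp only [act, _root_.map_mul, ContinuousLinearMap.mul_apply]
  by_cases hdet : IsUnit M.det
  · have c1 : Commute D N := by
      rw [hN]
      exact (Commute.one_right D).sub_right ((Commute.refl D).smul_right ΔT)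
    have c2 : Commute ((ε ^ 2 * ΔT) • D ^ 2) N := (c1.pow_left 2).smul_left _
    have c3 : Commute M N := by
      rw [hM, ← hN]
      exact Commute.add_left (Commute.refl N) c2
    have hcomm : M * N = N * M := c3.eq
    have hMi : M * M⁻¹ = 1 := Matrix.mul_nonsing_inv M hdet
    have hMi' : M⁻¹ * M = 1 := Matrix.nonsing_inv_mul M hdet
    have hswap : M⁻¹ * N = N * M⁻¹ := by
      calc M⁻¹ * N = M⁻¹ * N * (M * M⁻¹) := by rw [hMi, mul_one]
        _ = M⁻¹ * (N * M) * M⁻¹ := by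
            rw [mul_assoc (M⁻¹) N (M * M⁻¹), ← mul_assoc N M (M⁻¹),
              ← mul_assoc (M⁻¹) (N * M) (M⁻¹)]
        _ = M⁻¹ * (M * N) * M⁻¹ := by rw [← hcomm]
        _ = (M⁻¹ * M) * N * M⁻¹ := by rw [← mul_assoc (M⁻¹) M N]
        _ = N * M⁻¹ := by rw [hMi', one_mul]
    set y : EuclideanSpace ℝ (Fin m) := act M⁻¹ U with hy
    have hU : act M y = U := by
      rw [hy, ← hActMul, hMi]
      simp only [act, _root_.map_one, ContinuousLinearMap.one_apply]
    rw [hswap, hActMul, ← hy, ← hU]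
    have h1 : (fun i => act N y i) = N.mulVec (fun j => y j) := rfl
    have h2 : (fun i => act M y i) = M.mulVec (fun j => y j) := rfl
    have hsq : ‖act N y‖ ^ 2 ≤ ‖act M y‖ ^ 2 := by
      rw [euclid_norm_sq, euclid_norm_sq, h1, h2, hN, hM]
      exact key_ineq m h ΔT ε hh hΔT (fun j => y j)
    exact le_of_pow_le_pow_left₀ two_ne_zero (norm_nonneg _) hsq
  · rw [Matrix.nonsing_inv_apply_not_isUnit _ hdet, zero_mul]
    have h0 : act (0 : Matrix (Fin m) (Fin m) ℝ) U = 0 := by simp only [act, _root_.map_zero, ContinuousLinearMap.zero_apply]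
    rw [h0]
    simp
end

section
/- With D_h the m×m discrete Laplacian and P_3 = (I − 3ΔT·D_h + ε²ΔT·D_h²)⁻¹(I − 3ΔT·D_h), for every natural number q the coarse propagator 𝒢(U) = P_3^q·U satisfies the growth condition ‖P_3^q·U‖ ≤ ‖U‖ for every U ∈ ℝ^m. -/
/-!
With `N = -D_h`, which is positive semidefinite because `D_h = -h⁻² GᵀG` for the forward-difference
matrix `G`, the propagator is `P = (I + aN + bN²)⁻¹ (I + aN)` with `a, b ≥ 0`. Writing
`x = (I + aN + bN²) y`, we get `P x = (I + aN) y`, and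
`⟪(I + aN) y, bN² y⟫ = b (‖N y‖² + a ⟪N y, N (N y)⟫) ≥ 0`, so `‖P x‖ ≤ ‖x‖`.
Hence `‖P‖ ≤ 1`, and the same holds for every power of `P`.
-/

open Matrix

section InnerProductSpace

variable {E : Type*} [NormedAddCommGroup E] [InnerProductSpace ℝ E]

theorem norm_le_norm_add_of_inner_nonneg {u v : E} (h : 0 ≤ inner ℝ u v) : ‖u‖ ≤ ‖u + v‖ := by
  rw [← sq_le_sq₀ (norm_nonneg _) (norm_nonneg _), norm_add_sq_real]
  nlinarith [sq_nonneg ‖v‖]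

theorem norm_sub_smul_apply_le_of_isPositive_neg {T : E →L[ℝ] E} (hT : (-T).IsPositive)
    {a b : ℝ} (ha : 0 ≤ a) (hb : 0 ≤ b) (y : E) :
    ‖y - a • T y‖ ≤ ‖y - a • T y + b • T (T y)‖ := by
  apply norm_le_norm_add_of_inner_nonneg
  have hsymm : inner ℝ y (T (T y)) = ‖T y‖ ^ 2 := by
    have := hT.inner_left_eq_inner_right y (T y)
    simp only [_root_.neg_apply, inner_neg_left, inner_neg_right, neg_inj] at this
    rw [← this, real_inner_self_eq_norm_sq]
  have hneg : 0 ≤ -inner ℝ (T y) (T (T y)) := by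
    simpa only [_root_.neg_apply, inner_neg_right] using hT.inner_nonneg_right (T y)
  rw [inner_smul_right, inner_sub_left, real_inner_smul_left, hsymm]
  exact mul_nonneg hb (by nlinarith [sq_nonneg ‖T y‖, mul_nonneg ha hneg])

theorem ContinuousLinearMap.norm_pow_le_one {T : E →L[ℝ] E} (hT : ‖T‖ ≤ 1) (q : ℕ) :
    ‖T ^ q‖ ≤ 1 := by
  induction q with
  | zero => exact ContinuousLinearMap.norm_id_le
  | succ q ih => exact (pow_succ T q ▸ norm_mul_le _ _).trans (mul_le_one₀ ih (norm_nonneg _) hT)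

end InnerProductSpace

section Matrix

variable {n : Type*} [Fintype n] [DecidableEq n]

theorem isPositive_toEuclideanCLM_iff {A : Matrix n n ℝ} :
    (toEuclideanCLM (𝕜 := ℝ) A).IsPositive ↔ A.PosSemidef := by
  rw [← ContinuousLinearMap.isPositive_toLinearMap_iff, coe_toEuclideanCLM_eq_toEuclideanLin,
    isPositive_toEuclideanLin_iff]

theorem toEuclideanCLM_mul_apply (A B : Matrix n n ℝ) (x : EuclideanSpace ℝ n) :
    toEuclideanCLM (𝕜 := ℝ) (A * B) x =
      toEuclideanCLM (𝕜 := ℝ) A (toEuclideanCLM (𝕜 := ℝ) B x) := by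
  rw [map_mul]
  rfl

variable {D : Matrix n n ℝ} {a b : ℝ}

theorem posDef_one_sub_smul_add_smul_sq (hD : (-D).PosSemidef) (ha : 0 ≤ a) (hb : 0 ≤ b) :
    (1 - a • D + b • D ^ 2).PosDef := by
  rw [sub_eq_add_neg, ← smul_neg, ← neg_sq]
  exact (PosDef.one.add_posSemidef (hD.smul ha)).add_posSemidef ((hD.pow 2).smul hb)

theorem norm_toEuclideanCLM_inv_mul_le_one (hD : (-D).PosSemidef) (ha : 0 ≤ a) (hb : 0 ≤ b) :
    ‖toEuclideanCLM (n := n) (𝕜 := ℝ) ((1 - a • D + b • D ^ 2)⁻¹ * (1 - a • D))‖ ≤ 1 := by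
  set A : Matrix n n ℝ := 1 - a • D
  set B : Matrix n n ℝ := A + b • D ^ 2
  have hB : IsUnit B.det :=
    (isUnit_iff_isUnit_det B).mp (posDef_one_sub_smul_add_smul_sq hD ha hb).isUnit
  have hPB : B⁻¹ * A * B = A := by
    have hcomm : Commute A B := (Commute.refl A).add_right <|
      ((Commute.one_left _).sub_left (((Commute.refl D).pow_right 2).smul_left a)).smul_right b
    rw [mul_assoc, hcomm.eq, ← mul_assoc, nonsing_inv_mul _ hB, one_mul]
  set T := toEuclideanCLM (𝕜 := ℝ) D
  have hT : (-T).IsPositive := by rwa [← map_neg, isPositive_toEuclideanCLM_iff]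
  refine ContinuousLinearMap.opNorm_le_bound _ zero_le_one fun x => ?_
  obtain ⟨y, rfl⟩ : ∃ y, toEuclideanCLM (𝕜 := ℝ) B y = x :=
    ⟨toEuclideanCLM (𝕜 := ℝ) B⁻¹ x, by
      rw [← toEuclideanCLM_mul_apply, mul_nonsing_inv _ hB, map_one]; rfl⟩
  have hAy : toEuclideanCLM (𝕜 := ℝ) A y = y - a • T y := by simp [A, T]
  have hBy : toEuclideanCLM (𝕜 := ℝ) B y = y - a • T y + b • T (T y) := by simp [A, B, T, sq]
  rw [← toEuclideanCLM_mul_apply, hPB, one_mul, hAy, hBy]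
  exact norm_sub_smul_apply_le_of_isPositive_neg hT ha hb y

end Matrix

noncomputable def forwardDiff (m : ℕ) : Matrix (Fin (m + 1)) (Fin m) ℝ :=
  of fun k j => (if (j : ℕ) = k then 1 else 0) - (if (j : ℕ) + 1 = k then 1 else 0)

theorem Dh_eq_neg_smul_transpose_mul (m : ℕ) (h : ℝ) :
    Dh m h = (-(1 / h ^ 2)) • ((forwardDiff m)ᵀ * forwardDiff m) := by
  ext i j
  rw [Matrix.smul_apply, mul_apply]
  simp only [transpose_apply, forwardDiff, of_apply]
  rw [Fin.sum_univ_eq_sum_range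
    (fun k => ((if (i : ℕ) = k then (1 : ℝ) else 0) - (if (i : ℕ) + 1 = k then 1 else 0)) *
      ((if (j : ℕ) = k then 1 else 0) - (if (j : ℕ) + 1 = k then 1 else 0)))]
  simp only [Dh, of_apply, mul_sub, mul_ite, mul_one, mul_zero, Finset.sum_ite_eq,
    Finset.mem_range, Finset.sum_sub_distrib, smul_eq_mul]
  have hi := i.isLt
  have hj := j.isLt
  split_ifs <;> first | omega | ring

theorem posSemidef_neg_Dh (m : ℕ) (h : ℝ) : (-Dh m h).PosSemidef := by
  rw [Dh_eq_neg_smul_transpose_mul, neg_smul, neg_neg, ← conjTranspose_eq_transpose_of_trivial]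
  exact (posSemidef_conjTranspose_mul_self _).smul (by positivity)

theorem stmt8_general (h ΔT ε : ℝ) (hΔT : 0 < ΔT)
    (m : ℕ) :
    ∀ q : ℕ, ∀ U : EuclideanSpace ℝ (Fin m),
      ‖act (Pmat m h ΔT ε 3 ^ q) U‖ ≤ ‖U‖ := by
  intro q U
  have hP : ‖toEuclideanCLM (n := Fin m) (𝕜 := ℝ) (Pmat m h ΔT ε 3)‖ ≤ 1 :=
    norm_toEuclideanCLM_inv_mul_le_one (posSemidef_neg_Dh m h) (by positivity) (by positivity)
  simpa [act, map_pow] using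
    (toEuclideanCLM (𝕜 := ℝ) (Pmat m h ΔT ε 3) ^ q).le_of_opNorm_le
      (ContinuousLinearMap.norm_pow_le_one hP q) U

theorem stmt8 (h ΔT ε : ℝ) (hh : 0 < h) (hΔT : 0 < ΔT) (hε : 0 < ε)
    (m : ℕ) (hm : 1 ≤ m) :
    ∀ q : ℕ, ∀ U : EuclideanSpace ℝ (Fin m),
      ‖act (Pmat m h ΔT ε 3 ^ q) U‖ ≤ ‖U‖ :=
  stmt8_general h ΔT ε hΔT m
end

section
/- (Stability of PA-I.) Let u⁰ ∈ ℝ^m and let (U_n^k)_{n,k≥0} be a family of vectors in ℝ^m satisfying U_0^k = u⁰ for all k and the Parareal recurrence U_{n+1}^{k+1} = P_1·U_n^{k+1} + (P_{J_1} − P_1)·U_n^k for all n, k ≥ 0. Then for every n and k, ‖U_{n+1}^{k+1}‖ ≤ ‖u⁰‖ + (n+1)·max_{0≤j≤n} ‖U_j^k‖. -/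
/-!
`D_h` is symmetric, and by Gershgorin its spectrum lies in `(-∞, 0]`: each row has diagonal
entry `-2/h²` and off-diagonal mass at most `2/h²`. By the continuous functional calculus,
`P_1 = r(D_h)` and `P_{J_1} = s(D_h)^J` for rational amplification factors `r`, `s` that map
`(-∞, 0]` into `[0, 1]`, so `‖P_1‖ ≤ 1` and `‖P_{J_1} - P_1‖ ≤ max |s^J - r| ≤ 1` over the spectrum.
The recurrence then gives `‖U_{n+1}^{k+1}‖ ≤ ‖U_n^{k+1}‖ + ‖U_n^k‖`, which telescopes in `n`.
-/

open Matrix Finset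

theorem Matrix.nonpos_of_mem_spectrum_of_diag_add_sum_abs_nonpos {n : Type*} [Fintype n]
    [DecidableEq n] {A : Matrix n n ℝ}
    (hA : ∀ k, A k k + ∑ j ∈ univ.erase k, |A k j| ≤ 0) {μ : ℝ} (hμ : μ ∈ spectrum ℝ A) :
    μ ≤ 0 := by
  rw [← Matrix.spectrum_toLin', ← Module.End.hasEigenvalue_iff_mem_spectrum] at hμ
  obtain ⟨k, hk⟩ := eigenvalue_mem_ball hμ
  rw [Metric.mem_closedBall, Real.dist_eq] at hk
  have := hA k
  simp only [Real.norm_eq_abs] at hk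
  linarith [le_abs_self (μ - A k k)]

theorem card_filter_adjacent_le_two {m : ℕ} (k : Fin m) (s : Finset (Fin m)) :
    #(s.filter fun j : Fin m => (k : ℕ) + 1 = j ∨ (j : ℕ) + 1 = k) ≤ 2 := by
  calc #(s.filter fun j : Fin m => (k : ℕ) + 1 = j ∨ (j : ℕ) + 1 = k)
      ≤ #({(k : ℕ) + 1, (k : ℕ) - 1} : Finset ℕ) :=
        card_le_card_of_injOn Fin.val (fun j hj => by simp at hj ⊢; omega) Fin.val_injective.injOn
    _ ≤ 2 := card_le_two

theorem Dh_isHermitian (m : ℕ) (h : ℝ) : (Dh m h).IsHermitian := by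
  ext i j
  simp only [conjTranspose_apply, Dh, of_apply, star_trivial]
  by_cases hij : (i : ℕ) = j <;> simp [hij, eq_comm, or_comm]

theorem Dh_diag_add_sum_abs_nonpos (m : ℕ) (h : ℝ) (k : Fin m) :
    Dh m h k k + ∑ j ∈ univ.erase k, |Dh m h k j| ≤ 0 := by
  have hc : 0 ≤ 1 / h ^ 2 := by positivity
  have hoff : ∑ j ∈ univ.erase k, |Dh m h k j|
      = ∑ j ∈ univ.erase k, if (k : ℕ) + 1 = j ∨ (j : ℕ) + 1 = k then 1 / h ^ 2 else 0 := by
    refine sum_congr rfl fun j hj => ?_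
    have hjk : (k : ℕ) ≠ j := fun e => (mem_erase.1 hj).1 (Fin.ext e).symm
    split_ifs with hadj <;> simp [Dh, hjk, hadj]
  rw [hoff, ← sum_filter, sum_const, nsmul_eq_mul]
  have hcard : (#((univ.erase k).filter fun j : Fin m => (k : ℕ) + 1 = j ∨ (j : ℕ) + 1 = k)
      : ℝ) ≤ 2 := by exact_mod_cast card_filter_adjacent_le_two k _
  simp only [Dh, of_apply, if_true]
  linarith [mul_le_mul_of_nonneg_right hcard hc]

theorem nonpos_of_mem_spectrum_Dh (m : ℕ) (h : ℝ) {μ : ℝ} (hμ : μ ∈ spectrum ℝ (Dh m h)) : μ ≤ 0 :=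
  nonpos_of_mem_spectrum_of_diag_add_sum_abs_nonpos (Dh_diag_add_sum_abs_nonpos m h) hμ

open scoped Matrix.Norms.L2Operator

noncomputable def amplificationFactor (a b t : ℝ) : ℝ := (1 - a * t + b * t ^ 2)⁻¹ * (1 - a * t)

theorem amplificationFactor_mem_Icc {a b t : ℝ} (ha : 0 ≤ a) (hb : 0 ≤ b) (ht : t ≤ 0) :
    amplificationFactor a b t ∈ Set.Icc 0 1 := by
  have hnum : 0 < 1 - a * t := by nlinarith
  have hden : 0 < 1 - a * t + b * t ^ 2 := by positivity
  rw [amplificationFactor, inv_mul_eq_div, Set.mem_Icc, div_le_one hden]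
  exact ⟨by positivity, by nlinarith⟩

theorem cfc_amplificationFactor {A : Type*} [Ring A] [StarRing A] [Algebra ℝ A]
    [TopologicalSpace A] [ContinuousFunctionalCalculus ℝ A IsSelfAdjoint] {a b : ℝ} {x : A}
    (hx : IsSelfAdjoint x) (hden : ∀ t ∈ spectrum ℝ x, 1 - a * t + b * t ^ 2 ≠ 0) :
    cfc (amplificationFactor a b) x = Ring.inverse (1 - a • x + b • x ^ 2) * (1 - a • x) := by
  have hpoly : cfc (fun t : ℝ => 1 - a * t + b * t ^ 2) x = 1 - a • x + b • x ^ 2 := by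
    rw [cfc_add .., cfc_sub .., cfc_const_one ℝ x, cfc_const_mul_id .., cfc_const_mul ..,
      cfc_pow_id ..]
  have hlin : cfc (fun t : ℝ => 1 - a * t) x = 1 - a • x := by
    rw [cfc_sub .., cfc_const_one ℝ x, cfc_const_mul_id ..]
  change cfc (fun t => (1 - a * t + b * t ^ 2)⁻¹ * (1 - a * t)) x = _
  rw [cfc_mul (fun t => (1 - a * t + b * t ^ 2)⁻¹) _ x
    (ContinuousOn.inv₀ (by fun_prop) hden), cfc_inv _ x hden, hpoly, hlin]

theorem inv_mul_eq_cfc_amplificationFactor (m : ℕ) (h : ℝ) {a b : ℝ} (ha : 0 ≤ a)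
    (hb : 0 ≤ b) :
    ((1 : Matrix (Fin m) (Fin m) ℝ) - a • Dh m h + b • Dh m h ^ 2)⁻¹ * (1 - a • Dh m h)
      = cfc (amplificationFactor a b) (Dh m h) := by
  have hden : ∀ t ∈ spectrum ℝ (Dh m h), 1 - a * t + b * t ^ 2 ≠ 0 := fun t ht => by
    nlinarith [mul_nonneg ha (neg_nonneg.2 (nonpos_of_mem_spectrum_Dh m h ht)),
      mul_nonneg hb (sq_nonneg t)]
  rw [cfc_amplificationFactor (Dh_isHermitian m h).isSelfAdjoint hden, nonsing_inv_eq_ringInverse]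

theorem norm_cfc_Dh_le_one (m : ℕ) (h : ℝ) {f : ℝ → ℝ} (hf : ∀ t ≤ 0, |f t| ≤ 1) :
    ‖cfc f (Dh m h)‖ ≤ 1 :=
  norm_cfc_le zero_le_one fun t ht => hf t (nonpos_of_mem_spectrum_Dh m h ht)

theorem norm_Pmat_le_one (m : ℕ) (h : ℝ) {ΔT : ℝ} (hΔT : 0 ≤ ΔT) (ε : ℝ) (i : ℕ) :
    ‖Pmat m h ΔT ε i‖ ≤ 1 := by
  rw [Pmat, inv_mul_eq_cfc_amplificationFactor m h (by positivity) (by positivity)]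
  refine norm_cfc_Dh_le_one m h fun t ht => ?_
  have hf := amplificationFactor_mem_Icc (a := i * ΔT) (b := ε ^ 2 * ΔT) (by positivity)
    (by positivity) ht
  exact (abs_of_nonneg hf.1).trans_le hf.2

theorem norm_PJmat_sub_Pmat_le_one (m : ℕ) (h : ℝ) {ΔT : ℝ} (hΔT : 0 ≤ ΔT) (ε : ℝ) (J i : ℕ) :
    ‖PJmat m h ΔT ε J i - Pmat m h ΔT ε i‖ ≤ 1 := by
  set f := amplificationFactor (i * ΔT) (ε ^ 2 * ΔT)
  set g := amplificationFactor (i * ΔT / J) (ε ^ 2 * (ΔT / J))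
  have hspec := (Dh m h).finite_spectrum
  have hdiff : PJmat m h ΔT ε J i - Pmat m h ΔT ε i = cfc (fun t => g t ^ J - f t) (Dh m h) := by
    rw [PJmat, Pmat, inv_mul_eq_cfc_amplificationFactor m h (by positivity) (by positivity),
      inv_mul_eq_cfc_amplificationFactor m h (by positivity) (by positivity),
      cfc_sub _ _ _ (hspec.continuousOn _) (hspec.continuousOn _),
      cfc_pow _ _ _ (hspec.continuousOn _) (Dh_isHermitian m h).isSelfAdjoint]
  rw [hdiff]
  refine norm_cfc_Dh_le_one m h fun t ht => ?_
  have hf := amplificationFactor_mem_Icc (a := i * ΔT) (b := ε ^ 2 * ΔT) (by positivity)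
    (by positivity) ht
  have hg := amplificationFactor_mem_Icc (a := i * ΔT / J) (b := ε ^ 2 * (ΔT / J))
    (by positivity) (by positivity) ht
  exact abs_sub_le_of_nonneg_of_le (pow_nonneg hg.1 J) (pow_le_one₀ hg.1 hg.2) hf.1 hf.2

theorem norm_act_le_of_norm_le_one {m : ℕ} {A : Matrix (Fin m) (Fin m) ℝ} (hA : ‖A‖ ≤ 1)
    (x : EuclideanSpace ℝ (Fin m)) : ‖act A x‖ ≤ ‖x‖ := by
  simpa [act] using (Matrix.toEuclideanCLM (𝕜 := ℝ) A).le_of_opNorm_le hA x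

theorem le_add_mul_sup'_of_le_add {a b : ℕ → ℝ} (hab : ∀ n, a (n + 1) ≤ a n + b n) (n : ℕ) :
    a (n + 1) ≤ a 0 + (n + 1) * (range (n + 1)).sup' nonempty_range_add_one b := by
  have hsum : ∀ n, a (n + 1) ≤ a 0 + ∑ j ∈ range (n + 1), b j := by
    intro n
    induction n with
    | zero => simpa using hab 0
    | succ n ih => rw [sum_range_succ]; linarith [hab (n + 1)]
  calc a (n + 1) ≤ a 0 + ∑ j ∈ range (n + 1), b j := hsum n
    _ ≤ a 0 + #(range (n + 1)) • (range (n + 1)).sup' nonempty_range_add_one b := by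
        gcongr
        exact sum_le_card_nsmul _ _ _ fun j hj => le_sup' b hj
    _ = a 0 + (n + 1) * (range (n + 1)).sup' nonempty_range_add_one b := by
        rw [card_range, nsmul_eq_mul]; push_cast; rfl

theorem stmt9_general (h ΔT ε : ℝ) (hΔT : 0 < ΔT)
    (m : ℕ) (J : ℕ)
    (u0 : EuclideanSpace ℝ (Fin m)) (U : ℕ → ℕ → EuclideanSpace ℝ (Fin m))
    (h0 : ∀ k, U 0 k = u0)
    (hrec : ∀ n k, U (n + 1) (k + 1) =
      act (Pmat m h ΔT ε 1) (U n (k + 1))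
        + act (PJmat m h ΔT ε J 1 - Pmat m h ΔT ε 1) (U n k)) :
    ∀ n k, ‖U (n + 1) (k + 1)‖ ≤ ‖u0‖ +
      ((n : ℝ) + 1) *
        ((Finset.range (n + 1)).sup' (Finset.nonempty_range_iff.mpr n.succ_ne_zero)
          fun j => ‖U j k‖) := by
  intro n k
  have hstep : ∀ j, ‖U (j + 1) (k + 1)‖ ≤ ‖U j (k + 1)‖ + ‖U j k‖ := fun j => by
    rw [hrec]
    exact (norm_add_le _ _).trans <| add_le_add
      (norm_act_le_of_norm_le_one (norm_Pmat_le_one m h hΔT.le ε 1) _)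
      (norm_act_le_of_norm_le_one (norm_PJmat_sub_Pmat_le_one m h hΔT.le ε J 1) _)
  simpa only [h0] using le_add_mul_sup'_of_le_add (a := fun j => ‖U j (k + 1)‖) hstep n

theorem stmt9 (h ΔT ε : ℝ) (hh : 0 < h) (hΔT : 0 < ΔT) (hε : 0 < ε)
    (m : ℕ) (hm : 1 ≤ m) (J : ℕ) (hJ : 2 ≤ J)
    (u0 : EuclideanSpace ℝ (Fin m)) (U : ℕ → ℕ → EuclideanSpace ℝ (Fin m))
    (h0 : ∀ k, U 0 k = u0)
    (hrec : ∀ n k, U (n + 1) (k + 1) =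
      act (Pmat m h ΔT ε 1) (U n (k + 1))
        + act (PJmat m h ΔT ε J 1 - Pmat m h ΔT ε 1) (U n k)) :
    ∀ n k, ‖U (n + 1) (k + 1)‖ ≤ ‖u0‖ +
      ((n : ℝ) + 1) *
        ((Finset.range (n + 1)).sup' (Finset.nonempty_range_iff.mpr n.succ_ne_zero)
          fun j => ‖U j k‖) :=
  stmt9_general h ΔT ε hΔT m J u0 U h0 hrec
end

section
/- (Convergence of PA-I.) Let N ≥ 1 be an integer, u⁰ ∈ ℝ^m, and define the fine solution by U(T_0) = u⁰ and U(T_{n+1}) = P_{J_1}·U(T_n) for 0 ≤ n ≤ N−1. Let (U_n^k)_{0≤n≤N, k≥0} satisfy U_0^k = u⁰ for all k and U_{n+1}^{k+1} = P_1·U_n^{k+1} + (P_{J_1} − P_1)·U_n^k for 0 ≤ n ≤ N−1 and k ≥ 0. Set E_n^k = U(T_n) − U_n^k, α = ‖P_{J_1} − P_1‖ and β = ‖P_1‖ (so β < 1). Then for every k ≥ 0, max_{1≤j≤N} ‖E_j^{k+1}‖ ≤ α^{k+1} · min{ ((1 − β^{N−1})/(1 − β))^{k+1} , C(N−1, k+1)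 } · max_{1≤j≤N} ‖E_j^0‖, where C(·,·) denotes the binomial coefficient. -/
/-!
The iteration errors `E n k = Uf n - U n k` vanish at `n = 0` and satisfy
`E (n+1) (k+1) = P₁ E n (k+1) + (P_J - P₁) E n k`, so their norms obey
`e (n+1) (k+1) ≤ β e n (k+1) + α e n k`. Unrolling this in `n` against the maximum of `e · k`
gives the factor `α (1 + β + ⋯ + β ^ (N-2))` per iteration; using only `β ≤ 1`, a double
induction with Pascal's rule gives `e (n+1) k ≤ α ^ k * n.choose k * max e · 0`.

The contraction `β < 1` comes from `-D_h = h⁻² (2 - A)`, `A` the adjacency matrix of the path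
graph: this is the graph Laplacian plus a nonnegative diagonal that is positive at the first
vertex, hence positive definite. For such `D`, `‖(1 - tD) y‖ < ‖(1 - tD + cD²) y‖` when `y ≠ 0`,
and compactness of the unit sphere upgrades the pointwise inequality to `‖P₁‖ < 1`.
-/

open Finset Matrix SimpleGraph
open scoped RealInnerProductSpace

theorem ContinuousLinearMap.opNorm_lt_one_of_norm_apply_lt {E F : Type*}
    [NormedAddCommGroup E] [NormedSpace ℝ E] [FiniteDimensional ℝ E]
    [SeminormedAddCommGroup F] [NormedSpace ℝ F] (T : E →L[ℝ] F)
    (hT : ∀ x ≠ 0, ‖T x‖ < ‖x‖) : ‖T‖ < 1 := by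
  rcases subsingleton_or_nontrivial E with hE | hE
  · simp [T.opNorm_subsingleton]
  obtain ⟨x₀, hx₀, hmax⟩ := (isCompact_sphere (0 : E) 1).exists_isMaxOn
    (NormedSpace.sphere_nonempty.2 zero_le_one) T.continuous.norm.continuousOn
  rw [mem_sphere_zero_iff_norm] at hx₀
  calc ‖T‖ ≤ ‖T x₀‖ :=
        T.opNorm_le_of_unit_norm (norm_nonneg _) fun x hx => hmax (mem_sphere_zero_iff_norm.2 hx)
    _ < 1 := hx₀ ▸ hT x₀ (norm_ne_zero_iff.1 (by rw [hx₀]; exact one_ne_zero))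

/-- The cross term `⟪y - t • S y, S (S y)⟫` is at least `‖S y‖ ^ 2 > 0`. -/
theorem LinearMap.IsSymmetric.norm_sub_smul_lt_norm_add_smul {E : Type*}
    [NormedAddCommGroup E] [InnerProductSpace ℝ E] {S : E →ₗ[ℝ] E} (hS : S.IsSymmetric)
    (hneg : ∀ x ≠ 0, ⟪S x, x⟫ < 0) {t c : ℝ} (ht : 0 ≤ t) (hc : 0 < c) {y : E} (hy : y ≠ 0) :
    ‖y - t • S y‖ < ‖y - t • S y + c • S (S y)‖ := by
  have hSy : S y ≠ 0 := fun h0 => (hneg y hy).ne (by rw [h0, inner_zero_left])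
  have hcross : ‖S y‖ ^ 2 ≤ ⟪y - t • S y, S (S y)⟫ := by
    rw [inner_sub_left, real_inner_smul_left, ← hS, real_inner_self_eq_norm_sq, real_inner_comm]
    nlinarith [hneg _ hSy]
  have hpos : 0 < ‖S y‖ ^ 2 := by positivity
  rw [← sq_lt_sq₀ (norm_nonneg _) (norm_nonneg _), norm_add_sq_real, real_inner_smul_right,
    norm_smul]
  nlinarith [sq_nonneg (‖c‖ * ‖S (S y)‖)]

theorem commute_one_sub_smul_add_smul_sq {R : Type*} [Ring R] [Algebra ℝ R] (D : R) (t c : ℝ) :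
    Commute (1 - t • D) (1 - t • D + c • D ^ 2) := by
  have hD : ∀ Z, Commute D Z → Commute (1 - t • D) Z := fun Z hZ =>
    (Commute.one_left Z).sub_left (hZ.smul_left t)
  exact (Commute.refl _).add_right (hD _ ((Commute.self_pow D 2).smul_right c))

section Matrix

variable {m : ℕ}

lemma act_mul (A B : Matrix (Fin m) (Fin m) ℝ) (x : EuclideanSpace ℝ (Fin m)) :
    act (A * B) x = act A (act B x) := by
  simp only [act, map_mul]; rfl

lemma act_one (x : EuclideanSpace ℝ (Fin m)) : act 1 x = x := by
  simp only [act, map_one]; rfl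

lemma norm_act_le (A : Matrix (Fin m) (Fin m) ℝ) (x : EuclideanSpace ℝ (Fin m)) :
    ‖act A x‖ ≤ opNorm A * ‖x‖ :=
  (toEuclideanCLM (𝕜 := ℝ) A).le_opNorm x

lemma norm_act_sub_le (P Q : Matrix (Fin m) (Fin m) ℝ) (a b c : EuclideanSpace ℝ (Fin m)) :
    ‖act Q a - (act P b + act (Q - P) c)‖ ≤ opNorm P * ‖a - b‖ + opNorm (Q - P) * ‖a - c‖ := by
  have : act Q a - (act P b + act (Q - P) c) = act P (a - b) + act (Q - P) (a - c) := by
    simp only [act, map_sub, FunLike.coe_sub, Pi.sub_apply]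
    abel
  rw [this]
  exact (norm_add_le _ _).trans (add_le_add (norm_act_le _ _) (norm_act_le _ _))

variable {D : Matrix (Fin m) (Fin m) ℝ} {t c : ℝ}

lemma posDef_one_sub_smul_add_smul_sq_s10 (hD : (-D).PosDef) (ht : 0 ≤ t) (hc : 0 ≤ c) :
    (1 - t • D + c • D ^ 2).PosDef := by
  have hD2 : (c • D ^ 2).PosSemidef := by
    have := (posSemidef_conjTranspose_mul_self (-D)).smul hc
    rwa [hD.isHermitian.eq, neg_mul_neg, ← pow_two] at this
  have hA : (1 - t • D).PosDef := by
    rw [show 1 - t • D = 1 + t • -D by simp [sub_eq_add_neg]]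
    exact PosDef.one.add_posSemidef (hD.posSemidef.smul ht)
  exact hA.add_posSemidef hD2

lemma norm_act_lt_norm_act_add_smul_sq (hD : (-D).PosDef) (ht : 0 ≤ t) (hc : 0 < c)
    {y : EuclideanSpace ℝ (Fin m)} (hy : y ≠ 0) :
    ‖act (1 - t • D) y‖ < ‖act (1 - t • D + c • D ^ 2) y‖ := by
  have hsymm : (toEuclideanLin D).IsSymmetric :=
    isSymmetric_toEuclideanLin_iff.mpr (by simpa using hD.isHermitian.neg)
  have hneg : ∀ x ≠ 0, ⟪toEuclideanLin D x, x⟫ < 0 := fun x hx => by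
    have := hD.dotProduct_mulVec_pos (x := WithLp.ofLp x) (by simpa using hx)
    change ⟪act D x, x⟫ < 0
    rw [real_inner_comm, act, inner_toEuclideanCLM]
    simpa [neg_mulVec] using this
  have key := hsymm.norm_sub_smul_lt_norm_add_smul hneg ht hc hy
  simp only [act, map_sub, map_one, map_smul, map_add, map_mul, pow_two, _root_.sub_apply,
    _root_.add_apply, _root_.smul_apply, one_apply_eq_self, mul_apply_eq_comp]
  exact key

/-- With `x = B y`, `P x = B⁻¹ A B y = A y`, and `‖A y‖ < ‖B y‖`. -/
theorem opNorm_inv_mul_lt_one (hD : (-D).PosDef) (ht : 0 ≤ t) (hc : 0 < c) :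
    opNorm ((1 - t • D + c • D ^ 2)⁻¹ * (1 - t • D)) < 1 := by
  set A := 1 - t • D
  set B := 1 - t • D + c • D ^ 2
  have hB : IsUnit B.det :=
    (isUnit_iff_isUnit_det B).mp (posDef_one_sub_smul_add_smul_sq_s10 hD ht hc.le).isUnit
  have hconj : B⁻¹ * A * B = A := by
    rw [mul_assoc, (commute_one_sub_smul_add_smul_sq D t c).eq, ← mul_assoc,
      nonsing_inv_mul B hB, one_mul]
  refine (toEuclideanCLM (𝕜 := ℝ) (B⁻¹ * A)).opNorm_lt_one_of_norm_apply_lt fun x hx => ?_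
  obtain ⟨y, rfl⟩ : ∃ y, act B y = x :=
    ⟨act B⁻¹ x, by rw [← act_mul, mul_nonsing_inv B hB, act_one]⟩
  have hy : y ≠ 0 := by rintro rfl; simp [act] at hx
  change ‖act (B⁻¹ * A) (act B y)‖ < _
  rw [← act_mul, hconj]
  exact norm_act_lt_norm_act_add_smul_sq hD ht hc hy

end Matrix

lemma two_sub_adjMatrix_eq_lapMatrix_add_diagonal {V R : Type*} [Fintype V] [DecidableEq V]
    [Ring R] (G : SimpleGraph V) [DecidableRel G.Adj] :
    2 - G.adjMatrix R = G.lapMatrix R + diagonal fun i => 2 - (G.degree i : R) := by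
  ext i j
  by_cases hij : i = j <;> simp [lapMatrix, degMatrix, hij, ofNat_apply]

lemma mul_sq_le_dotProduct_diagonal_mulVec {n : Type*} [Fintype n] [DecidableEq n]
    {d : n → ℝ} (hd : ∀ j, 0 ≤ d j) (x : n → ℝ) (i : n) :
    d i * x i ^ 2 ≤ x ⬝ᵥ (diagonal d *ᵥ x) := by
  have hsum : x ⬝ᵥ (diagonal d *ᵥ x) = ∑ j, d j * x j ^ 2 := by
    simp only [dotProduct, mulVec_diagonal]
    exact sum_congr rfl fun j _ => by ring
  rw [hsum]
  exact single_le_sum (f := fun j => d j * x j ^ 2) (fun j _ => mul_nonneg (hd j) (sq_nonneg _)) (mem_univ i)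

instance (n : ℕ) : DecidableRel (pathGraph n).Adj := fun _ _ =>
  decidable_of_iff _ pathGraph_adj.symm

lemma neighborFinset_pathGraph_subset {n : ℕ} (v : Fin n) :
    (pathGraph n).neighborFinset v ⊆
      (univ.filter fun w : Fin n => (w : ℕ) + 1 = v) ∪ univ.filter fun w => (w : ℕ) = v + 1 := by
  intro w
  simp only [mem_neighborFinset, pathGraph_adj, mem_union, mem_filter_univ]
  omega

lemma card_filter_val_le_one {n : ℕ} {P : ℕ → Prop} [DecidablePred P]
    (hP : ∀ a b, P a → P b → a = b) : #(univ.filter fun w : Fin n => P w) ≤ 1 :=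
  card_le_one.2 fun a ha b hb => Fin.ext (hP _ _ (by simpa using ha) (by simpa using hb))

lemma degree_pathGraph_le_two {n : ℕ} (v : Fin n) : (pathGraph n).degree v ≤ 2 := by
  rw [← card_neighborFinset_eq_degree]
  refine (card_le_card (neighborFinset_pathGraph_subset v)).trans ((card_union_le _ _).trans ?_)
  exact add_le_add (card_filter_val_le_one (P := (· + 1 = v)) fun _ _ _ _ => by omega)
    (card_filter_val_le_one (P := (· = v + 1)) fun _ _ _ _ => by omega)

lemma degree_pathGraph_zero_le_one {n : ℕ} (hn : 0 < n) : (pathGraph n).degree ⟨0, hn⟩ ≤ 1 := by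
  rw [← card_neighborFinset_eq_degree]
  refine (card_le_card (neighborFinset_pathGraph_subset _)).trans ((card_union_le _ _).trans ?_)
  simpa using card_filter_val_le_one (n := n) (P := (· = 1)) fun _ _ _ _ => by omega

/-- `2 - A` is the Laplacian of the path plus `diagonal (2 - degree)`, which is nonnegative and
at least `1` at the first vertex; a vector killed by the Laplacian is constant, hence zero. -/
theorem posDef_two_sub_adjMatrix_pathGraph (m : ℕ) :
    (2 - (pathGraph m).adjMatrix ℝ).PosDef := by
  set G := pathGraph m
  set d : Fin m → ℝ := fun i => 2 - G.degree i
  have hL := posSemidef_lapMatrix ℝ G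
  rw [two_sub_adjMatrix_eq_lapMatrix_add_diagonal]
  refine PosDef.of_dotProduct_mulVec_pos (hL.isHermitian.add (isHermitian_diagonal d))
    fun x hx => ?_
  obtain ⟨i, hi⟩ : ∃ i, x i ≠ 0 := by simpa [funext_iff] using hx
  set v₀ : Fin m := ⟨0, i.pos⟩
  have hd : ∀ j, 0 ≤ d j := fun j => by simpa [d] using degree_pathGraph_le_two j
  have hd₀ : 1 ≤ d v₀ := by
    have : (G.degree v₀ : ℝ) ≤ 1 := by exact_mod_cast degree_pathGraph_zero_le_one i.pos
    simp only [d]; linarith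
  have hdiag := mul_sq_le_dotProduct_diagonal_mulVec hd x v₀
  have hLx := hL.dotProduct_mulVec_nonneg x
  rw [star_trivial] at hLx ⊢
  rw [add_mulVec, dotProduct_add]
  by_cases h₀ : x v₀ = 0
  · have hLpos : 0 < x ⬝ᵥ (G.lapMatrix ℝ *ᵥ x) := by
      refine hLx.lt_of_ne fun hq => hi ?_
      rw [← h₀]
      exact (lapMatrix_toLinearMap₂'_apply'_eq_zero_iff_forall_reachable G x).1
        (by rw [toLinearMap₂'_apply']; exact hq.symm) i v₀ (pathGraph_preconnected m i v₀)
    nlinarith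
  · nlinarith [pow_pos (abs_pos.2 h₀) 2, sq_abs (x v₀)]

lemma Dh_eq_smul_adjMatrix_sub_two (m : ℕ) (h : ℝ) :
    Dh m h = (1 / h ^ 2) • ((pathGraph m).adjMatrix ℝ - 2) := by
  ext i j
  simp only [Dh, one_div, mul_neg, mul_one, of_apply, Matrix.smul_apply, Matrix.sub_apply, adjMatrix_apply,
    pathGraph_adj, ofNat_apply, Fin.ext_iff, Nat.cast_ite, Nat.cast_ofNat, CharP.cast_eq_zero,
    smul_eq_mul]
  split_ifs <;> simp_all

theorem posDef_neg_Dh (m : ℕ) {h : ℝ} (hh : h ≠ 0) : (-Dh m h).PosDef := by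
  rw [Dh_eq_smul_adjMatrix_sub_two, ← smul_neg, neg_sub]
  exact (posDef_two_sub_adjMatrix_pathGraph m).smul (by positivity)

theorem opNorm_Pmat_lt_one (m : ℕ) {h ΔT ε : ℝ} (hh : h ≠ 0) (hΔT : 0 < ΔT) (hε : ε ≠ 0)
    (i : ℕ) : opNorm (Pmat m h ΔT ε i) < 1 :=
  opNorm_inv_mul_lt_one (posDef_neg_Dh m hh) (by positivity) (by positivity)

/-- `e n k` is the error at time step `n` after `k` iterations. -/
structure PararealErrorRecursion (N : ℕ) (α β : ℝ) (e : ℕ → ℕ → ℝ) : Prop where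
  nonneg : ∀ n k, 0 ≤ e n k
  zero_left : ∀ k, e 0 k = 0
  succ_succ_le : ∀ n < N, ∀ k, e (n + 1) (k + 1) ≤ β * e n (k + 1) + α * e n k

namespace PararealErrorRecursion

variable {N : ℕ} {α β : ℝ} {e : ℕ → ℕ → ℝ}

lemma le_mul_geom_sum_mul (he : PararealErrorRecursion N α β e) (hα : 0 ≤ α) (hβ : 0 ≤ β)
    {k : ℕ} {B : ℝ} (hB : ∀ j ≤ N, e j k ≤ B) :
    ∀ n < N, e (n + 1) (k + 1) ≤ α * (∑ i ∈ range n, β ^ i) * B := by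
  intro n hn
  induction n with
  | zero => simpa [he.zero_left] using he.succ_succ_le 0 hn k
  | succ n ih =>
    calc e (n + 2) (k + 1) ≤ β * e (n + 1) (k + 1) + α * e (n + 1) k := he.succ_succ_le _ hn k
      _ ≤ β * (α * (∑ i ∈ range n, β ^ i) * B) + α * B := by
          gcongr
          · exact ih (by omega)
          · exact hB _ hn.le
      _ = α * (∑ i ∈ range (n + 1), β ^ i) * B := by rw [geom_sum_succ]; ring

lemma le_pow_mul_choose_mul (he : PararealErrorRecursion N α β e) (hα : 0 ≤ α) (hβ : β ≤ 1)
    {B : ℝ} (hB : ∀ j ≤ N, e j 0 ≤ B) :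
    ∀ k, ∀ n < N, e (n + 1) k ≤ α ^ k * n.choose k * B := by
  intro k
  induction k with
  | zero => intro n hn; simpa using hB (n + 1) hn
  | succ k ihk =>
    intro n hn
    induction n with
    | zero => simpa [he.zero_left] using he.succ_succ_le 0 hn k
    | succ n ihn =>
      calc e (n + 2) (k + 1) ≤ β * e (n + 1) (k + 1) + α * e (n + 1) k := he.succ_succ_le _ hn k
        _ ≤ e (n + 1) (k + 1) + α * e (n + 1) k := by
            gcongr; exact mul_le_of_le_one_left (he.nonneg _ _) hβ
        _ ≤ α ^ (k + 1) * n.choose (k + 1) * B + α * (α ^ k * n.choose k * B) := by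
            gcongr
            · exact ihn (by omega)
            · exact ihk n (by omega)
        _ = α ^ (k + 1) * (n + 1).choose (k + 1) * B := by
            rw [Nat.choose_succ_succ', Nat.cast_add]; ring

variable (hN : (Icc 1 N).Nonempty)

lemma le_sup' (he : PararealErrorRecursion N α β e) (k : ℕ) :
    ∀ j ≤ N, e j k ≤ (Icc 1 N).sup' hN (e · k) := by
  intro j hj
  rcases j.eq_zero_or_pos with rfl | hj₀
  · rw [he.zero_left]
    exact (he.nonneg N k).trans (Finset.le_sup' (e · k) (right_mem_Icc.2 (nonempty_Icc.1 hN)))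
  · exact Finset.le_sup' (e · k) (mem_Icc.2 ⟨hj₀, hj⟩)

lemma sup'_nonneg (he : PararealErrorRecursion N α β e) (k : ℕ) :
    0 ≤ (Icc 1 N).sup' hN (e · k) :=
  (he.nonneg 0 k).trans (he.le_sup' hN k 0 N.zero_le)

lemma sup'_succ_le (he : PararealErrorRecursion N α β e) (hα : 0 ≤ α) (hβ : 0 ≤ β) (k : ℕ) :
    (Icc 1 N).sup' hN (e · (k + 1)) ≤
      (α * ∑ i ∈ range (N - 1), β ^ i) * (Icc 1 N).sup' hN (e · k) := by
  refine sup'_le _ _ fun j hj => ?_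
  obtain ⟨n, rfl⟩ : ∃ n, j = n + 1 := Nat.exists_eq_add_one.2 (mem_Icc.1 hj).1
  have hn : n < N := by have := (mem_Icc.1 hj).2; omega
  refine (he.le_mul_geom_sum_mul hα hβ (he.le_sup' hN k) n hn).trans ?_
  have hsum : ∑ i ∈ range n, β ^ i ≤ ∑ i ∈ range (N - 1), β ^ i :=
    sum_le_sum_of_subset_of_nonneg (range_mono (by omega)) fun i _ _ => pow_nonneg hβ i
  have := he.sup'_nonneg hN k
  gcongr

lemma sup'_le_pow_geom_sum_mul (he : PararealErrorRecursion N α β e) (hα : 0 ≤ α) (hβ : 0 ≤ β)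
    (k : ℕ) :
    (Icc 1 N).sup' hN (e · k) ≤
      (α * ∑ i ∈ range (N - 1), β ^ i) ^ k * (Icc 1 N).sup' hN (e · 0) := by
  induction k with
  | zero => simp
  | succ k ih =>
    have hS : 0 ≤ α * ∑ i ∈ range (N - 1), β ^ i :=
      mul_nonneg hα (sum_nonneg fun i _ => pow_nonneg hβ i)
    calc (Icc 1 N).sup' hN (e · (k + 1))
        ≤ (α * ∑ i ∈ range (N - 1), β ^ i) * (Icc 1 N).sup' hN (e · k) :=
          he.sup'_succ_le hN hα hβ k
      _ ≤ (α * ∑ i ∈ range (N - 1), β ^ i) *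
            ((α * ∑ i ∈ range (N - 1), β ^ i) ^ k * (Icc 1 N).sup' hN (e · 0)) := by gcongr
      _ = _ := by ring

lemma sup'_le_pow_mul_choose_mul (he : PararealErrorRecursion N α β e) (hα : 0 ≤ α)
    (hβ : β ≤ 1) (k : ℕ) :
    (Icc 1 N).sup' hN (e · k) ≤ α ^ k * (N - 1).choose k * (Icc 1 N).sup' hN (e · 0) := by
  refine sup'_le _ _ fun j hj => ?_
  obtain ⟨n, rfl⟩ : ∃ n, j = n + 1 := Nat.exists_eq_add_one.2 (mem_Icc.1 hj).1
  have hn : n < N := by have := (mem_Icc.1 hj).2; omega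
  refine (he.le_pow_mul_choose_mul hα hβ (he.le_sup' hN 0) k n hn).trans ?_
  have hchoose : (n.choose k : ℝ) ≤ (N - 1).choose k := by
    exact_mod_cast Nat.choose_le_choose k (by omega)
  have := he.sup'_nonneg hN 0
  gcongr

end PararealErrorRecursion

theorem stmt10_general (h ΔT ε : ℝ) (hh : 0 < h) (hΔT : 0 < ΔT) (hε : 0 < ε)
    (m : ℕ) (J : ℕ)
    (N : ℕ) (hN : 1 ≤ N)
    (u0 : EuclideanSpace ℝ (Fin m))
    (Uf : ℕ → EuclideanSpace ℝ (Fin m)) (U : ℕ → ℕ → EuclideanSpace ℝ (Fin m))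
    (hUf0 : Uf 0 = u0)
    (hUfrec : ∀ n < N, Uf (n + 1) = act (PJmat m h ΔT ε J 1) (Uf n))
    (h0 : ∀ k, U 0 k = u0)
    (hrec : ∀ n < N, ∀ k, U (n + 1) (k + 1) =
      act (Pmat m h ΔT ε 1) (U n (k + 1))
        + act (PJmat m h ΔT ε J 1 - Pmat m h ΔT ε 1) (U n k)) :
    ∀ k : ℕ,
      ((Finset.Icc 1 N).sup' (Finset.nonempty_Icc.mpr hN)
          fun j => ‖Uf j - U j (k + 1)‖) ≤
        opNorm (PJmat m h ΔT ε J 1 - Pmat m h ΔT ε 1) ^ (k + 1) *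
          min (((1 - opNorm (Pmat m h ΔT ε 1) ^ (N - 1)) /
                  (1 - opNorm (Pmat m h ΔT ε 1))) ^ (k + 1))
              ((N - 1).choose (k + 1) : ℝ) *
          ((Finset.Icc 1 N).sup' (Finset.nonempty_Icc.mpr hN)
            fun j => ‖Uf j - U j 0‖) := by
  intro k
  set P₁ := Pmat m h ΔT ε 1
  set P_J := PJmat m h ΔT ε J 1
  set e : ℕ → ℕ → ℝ := fun n k => ‖Uf n - U n k‖
  have he : PararealErrorRecursion N (opNorm (P_J - P₁)) (opNorm P₁) e :=
    { nonneg := fun n k => norm_nonneg _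
      zero_left := fun k => by simp [e, hUf0, h0]
      succ_succ_le := fun n hn k => by
        simpa only [e, hUfrec n hn, hrec n hn k] using norm_act_sub_le P₁ P_J _ _ _ }
  have hα : 0 ≤ opNorm (P_J - P₁) := norm_nonneg _
  have hβ : opNorm P₁ < 1 := opNorm_Pmat_lt_one m hh.ne' hΔT hε.ne' 1
  have hS : (1 - opNorm P₁ ^ (N - 1)) / (1 - opNorm P₁) = ∑ i ∈ range (N - 1), opNorm P₁ ^ i := by
    rw [geom_sum_eq hβ.ne, ← neg_div_neg_eq, neg_sub, neg_sub]
  rw [hS, mul_min_of_nonneg _ _ (pow_nonneg hα _),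
    min_mul_of_nonneg _ _ (he.sup'_nonneg _ 0), ← mul_pow]
  exact le_min (he.sup'_le_pow_geom_sum_mul _ hα (norm_nonneg _) (k + 1))
    (he.sup'_le_pow_mul_choose_mul _ hα hβ.le (k + 1))

theorem stmt10 (h ΔT ε : ℝ) (hh : 0 < h) (hΔT : 0 < ΔT) (hε : 0 < ε)
    (m : ℕ) (hm : 1 ≤ m) (J : ℕ) (hJ : 2 ≤ J)
    (N : ℕ) (hN : 1 ≤ N)
    (u0 : EuclideanSpace ℝ (Fin m))
    (Uf : ℕ → EuclideanSpace ℝ (Fin m)) (U : ℕ → ℕ → EuclideanSpace ℝ (Fin m))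
    (hUf0 : Uf 0 = u0)
    (hUfrec : ∀ n < N, Uf (n + 1) = act (PJmat m h ΔT ε J 1) (Uf n))
    (h0 : ∀ k, U 0 k = u0)
    (hrec : ∀ n < N, ∀ k, U (n + 1) (k + 1) =
      act (Pmat m h ΔT ε 1) (U n (k + 1))
        + act (PJmat m h ΔT ε J 1 - Pmat m h ΔT ε 1) (U n k)) :
    ∀ k : ℕ,
      ((Finset.Icc 1 N).sup' (Finset.nonempty_Icc.mpr hN)
          fun j => ‖Uf j - U j (k + 1)‖) ≤
        opNorm (PJmat m h ΔT ε J 1 - Pmat m h ΔT ε 1) ^ (k + 1) *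
          min (((1 - opNorm (Pmat m h ΔT ε 1) ^ (N - 1)) /
                  (1 - opNorm (Pmat m h ΔT ε 1))) ^ (k + 1))
              ((N - 1).choose (k + 1) : ℝ) *
          ((Finset.Icc 1 N).sup' (Finset.nonempty_Icc.mpr hN)
            fun j => ‖Uf j - U j 0‖) :=
  stmt10_general h ΔT ε hh hΔT hε m J N hN u0 Uf U hUf0 hUfrec h0 hrec
end
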